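/- The function d(x, y) = |x − y| / (|x| + |y|) (with d(0,0) := 0) defines a metric on ℝ; in particular it satisfies the triangle inequality d(x, z) ≤ d(x, y) + d(y, z). -/

import Mathlib

/-!
Negating all three points preserves `smapeDist`, which never exceeds `1` and equals `1` on distinct
points of opposite signs; so the triangle inequality is immediate unless `x`, `y`, `z` have one
strict sign, say positive. For `0 < a ≤ b`, `smapeDist a b = (b - a) / (b + a)` grows as `[a, b]`
widens, which settles the case of `y` outside `[x, z]`. For positive reals
`smapeDist a b = tanh (|log a - log b| / 2)`, so for `y` between `x` and `z` the addition formula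
of `tanh` gives `d(x,z) = (d(x,y) + d(y,z)) / (1 + d(x,y) d(y,z)) ≤ d(x,y) + d(y,z)`.
-/

-- Division by zero is `0` in Lean, which is exactly the convention `d(0,0) = 0`.
noncomputable def smapeDist (x y : ℝ) : ℝ := |x - y| / (|x| + |y|)

theorem smapeDist_nonneg (x y : ℝ) : 0 ≤ smapeDist x y := by
  unfold smapeDist
  positivity

theorem smapeDist_comm (x y : ℝ) : smapeDist x y = smapeDist y x := by
  rw [smapeDist, smapeDist, abs_sub_comm, add_comm]

theorem smapeDist_self (x : ℝ) : smapeDist x x = 0 := by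
  simp [smapeDist]

theorem smapeDist_eq_zero_iff (x y : ℝ) : smapeDist x y = 0 ↔ x = y := by
  rw [smapeDist, div_eq_zero_iff, abs_eq_zero, sub_eq_zero]
  refine ⟨fun h ↦ h.elim id fun hsum ↦ ?_, Or.inl⟩
  have hx : x = 0 := abs_eq_zero.mp (by linarith [abs_nonneg x, abs_nonneg y])
  have hy : y = 0 := abs_eq_zero.mp (by linarith [abs_nonneg x, abs_nonneg y])
  rw [hx, hy]

theorem smapeDist_neg_neg (x y : ℝ) : smapeDist (-x) (-y) = smapeDist x y := by
  rw [smapeDist, smapeDist, abs_neg, abs_neg, ← neg_sub', abs_neg]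

theorem smapeDist_le_one (x y : ℝ) : smapeDist x y ≤ 1 :=
  div_le_one_of_le₀ (abs_sub _ _) (by positivity)

theorem smapeDist_eq_one_of_mul_nonpos {x y : ℝ} (hxy : x ≠ y) (h : x * y ≤ 0) :
    smapeDist x y = 1 := by
  have habs : |x - y| = |x| + |y| := by
    rcases mul_nonpos_iff.mp h with ⟨hx, hy⟩ | ⟨hx, hy⟩
    · rw [abs_of_nonneg hx, abs_of_nonpos hy, abs_of_nonneg (by linarith)]; ring
    · rw [abs_of_nonpos hx, abs_of_nonneg hy, abs_of_nonpos (by linarith)]; ring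
  rw [smapeDist, ← habs]
  exact div_self (abs_ne_zero.mpr (sub_ne_zero.mpr hxy))

theorem smapeDist_eq_div_of_le {a b : ℝ} (ha : 0 ≤ a) (hab : a ≤ b) :
    smapeDist a b = (b - a) / (b + a) := by
  rw [smapeDist, abs_sub_comm, abs_of_nonneg (sub_nonneg.mpr hab), abs_of_nonneg ha,
    abs_of_nonneg (ha.trans hab), add_comm a]

theorem smapeDist_le_smapeDist_of_le_of_le {a a' b b' : ℝ} (ha' : 0 ≤ a') (ha'a : a' ≤ a)
    (hab : a ≤ b) (hbb' : b ≤ b') (hb : 0 < b) : smapeDist a b ≤ smapeDist a' b' := by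
  rw [smapeDist_eq_div_of_le (ha'.trans ha'a) hab,
    smapeDist_eq_div_of_le ha' ((ha'a.trans hab).trans hbb'),
    div_le_div_iff₀ (by linarith) (by linarith)]
  nlinarith [mul_le_mul ha'a hbb' hb.le (ha'.trans ha'a)]

theorem smapeDist_le_add_of_le_of_le {a b c : ℝ} (ha : 0 < a) (hab : a ≤ b) (hbc : b ≤ c) :
    smapeDist a c ≤ smapeDist a b + smapeDist b c := by
  have addition : smapeDist a c * (1 + smapeDist a b * smapeDist b c) =
      smapeDist a b + smapeDist b c := by
    rw [smapeDist_eq_div_of_le ha.le (hab.trans hbc), smapeDist_eq_div_of_le ha.le hab,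
      smapeDist_eq_div_of_le (ha.le.trans hab) hbc]
    have hb : 0 < b := ha.trans_le hab
    have hc : 0 < c := hb.trans_le hbc
    field_simp
    ring
  calc smapeDist a c ≤ smapeDist a c * (1 + smapeDist a b * smapeDist b c) :=
        le_mul_of_one_le_right (smapeDist_nonneg a c)
          (le_add_of_nonneg_right (mul_nonneg (smapeDist_nonneg a b) (smapeDist_nonneg b c)))
    _ = smapeDist a b + smapeDist b c := addition

theorem smapeDist_triangle_of_pos {x y z : ℝ} (hx : 0 < x) (hy : 0 < y) (hz : 0 < z) :
    smapeDist x z ≤ smapeDist x y + smapeDist y z := by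
  wlog hxz : x ≤ z generalizing x z
  · have := this hz hx (le_of_not_ge hxz)
    rw [smapeDist_comm z x, smapeDist_comm z y, smapeDist_comm y x] at this
    linarith
  rcases le_total y x with hyx | hxy
  · linarith [smapeDist_le_smapeDist_of_le_of_le hy.le hyx hxz le_rfl hz, smapeDist_nonneg x y]
  rcases le_total y z with hyz | hzy
  · exact smapeDist_le_add_of_le_of_le hx hxy hyz
  · linarith [smapeDist_le_smapeDist_of_le_of_le hx.le le_rfl hxz hzy hz, smapeDist_nonneg y z]

theorem smapeDist_triangle_of_mul_pos {x y z : ℝ} (hxz : 0 < x * z) :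
    smapeDist x z ≤ smapeDist x y + smapeDist y z := by
  wlog hx : 0 < x generalizing x y z
  · have hx' : x < 0 := lt_of_le_of_ne (not_lt.mp hx) (by rintro rfl; simp at hxz)
    have := this (x := -x) (y := -y) (z := -z) (by simpa using hxz) (neg_pos.mpr hx')
    rwa [smapeDist_neg_neg, smapeDist_neg_neg, smapeDist_neg_neg] at this
  have hz : 0 < z := pos_of_mul_pos_right hxz hx.le
  rcases le_or_gt y 0 with hy | hy
  · rw [smapeDist_eq_one_of_mul_nonpos (by linarith) (mul_nonpos_of_nonneg_of_nonpos hx.le hy)]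
    linarith [smapeDist_le_one x z, smapeDist_nonneg y z]
  · exact smapeDist_triangle_of_pos hx hy hz

theorem smapeDist_triangle_of_mul_nonpos {x y z : ℝ} (hxz : x * z ≤ 0) :
    smapeDist x z ≤ smapeDist x y + smapeDist y z := by
  rcases eq_or_ne x y with rfl | hxy
  · simp [smapeDist_self]
  rcases eq_or_ne y z with rfl | hyz
  · simp [smapeDist_self]
  rcases eq_or_ne x z with rfl | hxz'
  · linarith [smapeDist_self x, smapeDist_nonneg x y, smapeDist_nonneg y x]
  rw [smapeDist_eq_one_of_mul_nonpos hxz' hxz]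
  -- `y` has the opposite sign of `x` or of `z`, since `(x * y) * (y * z) = (x * z) * y ^ 2 ≤ 0`.
  rcases le_or_gt (x * y) 0 with hxy0 | hxy0
  · linarith [smapeDist_eq_one_of_mul_nonpos hxy hxy0, smapeDist_nonneg y z]
  · have hyz0 : y * z ≤ 0 := by
      by_contra! hyz0
      nlinarith [mul_pos hxy0 hyz0, sq_nonneg y]
    linarith [smapeDist_eq_one_of_mul_nonpos hyz hyz0, smapeDist_nonneg x y]

theorem smapeDist_triangle (x y z : ℝ) : smapeDist x z ≤ smapeDist x y + smapeDist y z := by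
  rcases lt_or_ge 0 (x * z) with hxz | hxz
  · exact smapeDist_triangle_of_mul_pos hxz
  · exact smapeDist_triangle_of_mul_nonpos hxz

/-- `d(x,y) = |x−y|/(|x|+|y|)` (with `d(0,0)=0`) is a metric on `ℝ`. -/
theorem stmt_6 :
    (∀ x y : ℝ, 0 ≤ smapeDist x y) ∧
    (∀ x y : ℝ, smapeDist x y = 0 ↔ x = y) ∧
    (∀ x y : ℝ, smapeDist x y = smapeDist y x) ∧
    (∀ x y z : ℝ, smapeDist x z ≤ smapeDist x y + smapeDist y z) :=
  ⟨smapeDist_nonneg, smapeDist_eq_zero_iff, smapeDist_comm, smapeDist_triangle⟩
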